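/- Fix integers 1 ≤ r ≤ n. Let R be a commutative ring and c ∈ R. Let I_G(c) be the ideal of R[x₁,…,x_r] generated by h_{n−r+1}, …, h_{n−1}, h_n − c, and let I_P(c) be the ideal generated by x₁^n − c, …, x_r^n − c. Then Δ · I_G(c) ⊆ I_P(c); in particular, if P, Q ∈ R[x₁,…,x_r] satisfy P − Q ∈ I_G(c), then P·Δ − Q·Δ ∈ I_P(c). -/

import Mathlib

open Finset MvPolynomial

/-- The complete homogeneous symmetric polynomial of degree `k` in the variables
`x₁, …, x_r`: the sum of all monomials of total degree `k`. -/
noncomputable def hsymm (R : Type*) [CommRing R] (r k : ℕ) : MvPolynomial (Fin r) R :=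
  ∑ d ∈ (Fintype.piFinset fun _ : Fin r => Finset.range (k + 1)).filter
      (fun d => ∑ i, d i = k),
    ∏ i, X i ^ d i

/-- The Vandermonde determinant `Δ = ∏_{1 ≤ i < j ≤ r} (xᵢ - xⱼ)`. -/
noncomputable def vander (R : Type*) [CommRing R] (r : ℕ) : MvPolynomial (Fin r) R :=
  ∏ p ∈ Finset.univ.filter (fun p : Fin r × Fin r => p.1 < p.2), (X p.1 - X p.2)

/-- The ideal `I_P(c) = ⟨x₁ⁿ - c, …, x_rⁿ - c⟩` of `R[x₁,…,x_r]`. -/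
noncomputable def IP (R : Type*) [CommRing R] (r n : ℕ) (c : R) :
    Ideal (MvPolynomial (Fin r) R) :=
  Ideal.span (Set.range fun i : Fin r => X i ^ n - C c)

/-- The ideal `I_G(c) = ⟨h_{n-r+1}, …, h_{n-1}, h_n - c⟩` of `R[x₁,…,x_r]`. -/
noncomputable def IG (R : Type*) [CommRing R] (r n : ℕ) (c : R) :
    Ideal (MvPolynomial (Fin r) R) :=
  Ideal.span ((fun k => hsymm R r k) '' Set.Icc (n - r + 1) (n - 1) ∪ {hsymm R r n - C c})

/-!
Let `w` be the last row of the adjugate of the Vandermonde matrix `V = (xⱼ^i)`, so that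
`∑ⱼ wⱼ xⱼ^m = det V · δ_{m, r-1}` for `m < r`. The generating series of `aₘ = ∑ⱼ wⱼ xⱼ^m` and
of `det V · h_{m-r+1}` (zero for `m < r - 1`) both become polynomials of degree `< r` after
multiplication by the unit `∏ᵢ (1 - xᵢ T)`, because `(1 - xⱼ T) ∑ xⱼ^m T^m = 1` and
`∏ᵢ (1 - xᵢ T) ∑ hₖ T^k = 1`. Since the two sequences agree below `r`, they agree everywhere. Modulo `I_P(c)` we have `xⱼ^(m+n) ≡ c xⱼ^m`,
hence `a_{m+n} ≡ c aₘ`: for `n - r + 1 ≤ k ≤ n - 1` this gives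
`det V · hₖ = a_{k+r-1} ≡ c a_{k+r-1-n} = 0`, and for `k = n` it gives
`det V · hₙ ≡ c a_{r-1} = c det V`. Finally `Δ = ± det V`.
-/

namespace PowerSeries

variable {S : Type*} [CommRing S]

theorem one_sub_C_mul_X_mul_mk_pow (x : S) : (1 - C x * X) * mk (x ^ ·) = 1 := by
  simpa [rescale_mk, mul_comm] using congrArg (rescale x) (mk_one_mul_one_sub_eq_one S)

theorem coeff_prod_one_sub_C_mul_X_of_card_lt {ι : Type*} (s : Finset ι) (a : ι → S) {k : ℕ}
    (hk : #s < k) : coeff k (∏ i ∈ s, (1 - C (a i) * X)) = 0 := by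
  classical
  induction s using Finset.induction_on generalizing k with
  | empty =>
    rw [card_empty] at hk
    rw [prod_empty, coeff_one, if_neg hk.ne']
  | insert b s hb ih =>
    rw [card_insert_of_notMem hb] at hk
    obtain ⟨k, rfl⟩ : ∃ k', k = k' + 1 := ⟨k - 1, by omega⟩
    rw [prod_insert hb, sub_mul, one_mul, map_sub, mul_assoc, coeff_C_mul, coeff_succ_X_mul,
      ih (by omega), ih (by omega), mul_zero, sub_zero]

theorem eq_of_isUnit_of_coeff_mul_eq_zero {Q F G : S⟦X⟧} (hQ : IsUnit Q) {r : ℕ}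
    (hF : ∀ k, r ≤ k → coeff k (Q * F) = 0) (hG : ∀ k, r ≤ k → coeff k (Q * G) = 0)
    (hFG : ∀ m < r, coeff m F = coeff m G) : F = G := by
  have hlow : X ^ r ∣ Q * (F - G) :=
    Dvd.dvd.mul_left (X_pow_dvd_iff.mpr fun m hm => by simp [hFG m hm]) Q
  have hzero : Q * (F - G) = 0 := by
    ext k
    rcases lt_or_ge k r with hk | hk
    · exact X_pow_dvd_iff.mp hlow k hk
    · simp [mul_sub, hF k hk, hG k hk]
  exact sub_eq_zero.mp (hQ.mul_right_eq_zero.mp hzero)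

end PowerSeries

theorem Matrix.sum_adjugate_vandermonde_mul_pow {S : Type*} [CommRing S] {r : ℕ} (v : Fin r → S)
    (a m : Fin r) :
    ∑ j, (vandermonde v).adjugate a j * v j ^ (m : ℕ) =
      if a = m then (vandermonde v).det else 0 := by
  simpa [Matrix.mul_apply, Matrix.one_apply] using
    congrFun (congrFun (adjugate_mul (vandermonde v)) a) m

theorem sum_mul_X_pow_add_sub_C_mul_sum_mem_IP (R : Type*) [CommRing R] {r n : ℕ} (c : R)
    (w : Fin r → MvPolynomial (Fin r) R) (m : ℕ) :
    ∑ j, w j * X j ^ (m + n) - C c * ∑ j, w j * X j ^ m ∈ IP R r n c := by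
  rw [mul_sum, ← sum_sub_distrib]
  refine sum_mem fun j _ => ?_
  have hj : X j ^ n - C c ∈ IP R r n c := Ideal.subset_span ⟨j, rfl⟩
  convert Ideal.mul_mem_left _ (w j * X j ^ m) hj using 1
  ring

theorem associated_vander_det_vandermonde (R : Type*) [CommRing R] (r : ℕ) :
    Associated (vander R r) (Matrix.vandermonde (X : Fin r → MvPolynomial (Fin r) R)).det := by
  rw [Matrix.det_vandermonde, vander, prod_filter, Fintype.prod_prod_type]
  refine Associated.prod _ _ _ fun i _ => ?_
  rw [← prod_filter, filter_lt_eq_Ioi]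
  exact Associated.prod _ _ _ fun j _ => by rw [← neg_sub]; exact (Associated.refl _).neg_left

section

variable (R : Type*) [CommRing R] (r : ℕ)

noncomputable def recipCharSeries : PowerSeries (MvPolynomial (Fin r) R) :=
  ∏ i, (1 - PowerSeries.C (X i) * PowerSeries.X)

noncomputable def hsymmSeries : PowerSeries (MvPolynomial (Fin r) R) :=
  PowerSeries.mk (_root_.hsymm R r)

theorem hsymmSeries_eq_prod :
    hsymmSeries R r = ∏ i, PowerSeries.mk ((X i : MvPolynomial (Fin r) R) ^ ·) := by
  refine PowerSeries.ext fun d => ?_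
  rw [PowerSeries.coeff_prod, hsymmSeries, PowerSeries.coeff_mk, _root_.hsymm]
  symm
  refine sum_nbij' (⇑) Finsupp.equivFunOnFinite.symm ?_ ?_ (fun l _ => by simp) (fun g _ => rfl)
    (fun l _ => by simp only [PowerSeries.coeff_mk])
  · intro l hl
    simp only [mem_finsuppAntidiag, subset_univ, and_true] at hl
    simp only [mem_filter, Fintype.mem_piFinset, mem_range, hl, and_true]
    exact fun i => Nat.lt_succ_of_le (hl ▸ single_le_sum (fun _ _ => Nat.zero_le _) (mem_univ i))
  · intro g hg
    simp only [mem_filter] at hg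
    simp [hg.2]

theorem hsymm_zero : _root_.hsymm R r 0 = 1 := by
  simpa [hsymmSeries] using congrArg PowerSeries.constantCoeff (hsymmSeries_eq_prod R r)

theorem recipCharSeries_mul_hsymmSeries : recipCharSeries R r * hsymmSeries R r = 1 := by
  rw [recipCharSeries, hsymmSeries_eq_prod, ← prod_mul_distrib]
  exact prod_eq_one fun i _ => PowerSeries.one_sub_C_mul_X_mul_mk_pow _

theorem coeff_recipCharSeries_mul_mk_pow (j : Fin r) {k : ℕ} (hk : r ≤ k) :
    PowerSeries.coeff k
      (recipCharSeries R r * PowerSeries.mk ((X j : MvPolynomial (Fin r) R) ^ ·)) = 0 := by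
  rw [recipCharSeries, ← mul_prod_erase _ _ (mem_univ j), mul_right_comm,
    PowerSeries.one_sub_C_mul_X_mul_mk_pow, one_mul]
  refine PowerSeries.coeff_prod_one_sub_C_mul_X_of_card_lt _ _ ?_
  rw [card_erase_of_mem (mem_univ j), card_univ, Fintype.card_fin]
  exact lt_of_lt_of_le (Nat.sub_lt j.pos one_pos) hk

theorem sum_adjugate_last_mul_X_pow (m : ℕ) :
    ∑ j, (Matrix.vandermonde (X : Fin (r + 1) → MvPolynomial (Fin (r + 1)) R)).adjugate
        (Fin.last r) j * X j ^ m
      = (Matrix.vandermonde X).det * if r ≤ m then _root_.hsymm R (r + 1) (m - r) else 0 := by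
  have key : ∑ j, PowerSeries.C ((Matrix.vandermonde X).adjugate (Fin.last r) j)
        * PowerSeries.mk (X j ^ ·)
      = PowerSeries.C (Matrix.vandermonde X).det * (PowerSeries.X ^ r * hsymmSeries R (r + 1)) := by
    refine PowerSeries.eq_of_isUnit_of_coeff_mul_eq_zero (Q := recipCharSeries R (r + 1))
      (IsUnit.of_mul_eq_one _ (recipCharSeries_mul_hsymmSeries R (r + 1))) (r := r + 1)
      (fun k hk => ?_) (fun k hk => ?_) (fun m hm => ?_)
    · simp only [mul_sum, map_sum, mul_left_comm _ (PowerSeries.C _), PowerSeries.coeff_C_mul,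
        coeff_recipCharSeries_mul_mk_pow R (r + 1) _ hk, mul_zero, sum_const_zero]
    · rw [mul_left_comm, mul_left_comm _ (PowerSeries.X ^ r), recipCharSeries_mul_hsymmSeries,
        mul_one, PowerSeries.coeff_C_mul, PowerSeries.coeff_X_pow, if_neg (by omega), mul_zero]
    · have hadj := Matrix.sum_adjugate_vandermonde_mul_pow
        (X : Fin (r + 1) → MvPolynomial (Fin (r + 1)) R) (Fin.last r) ⟨m, hm⟩
      simp only [map_sum, PowerSeries.coeff_C_mul, PowerSeries.coeff_mk,
        PowerSeries.coeff_X_pow_mul', hsymmSeries]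
      rcases (Nat.lt_succ_iff.mp hm).lt_or_eq with hm | rfl
      · simp_all [Fin.ext_iff, not_le.mpr hm, hm.ne']
      · simp_all [Fin.ext_iff, _root_.hsymm_zero]
  simpa [map_sum, PowerSeries.coeff_C_mul, PowerSeries.coeff_X_pow_mul', hsymmSeries]
    using congrArg (PowerSeries.coeff m) key

theorem IG_le_colon_det_vandermonde {n : ℕ} (hrn : r + 1 ≤ n) (c : R) :
    IG R (r + 1) n c ≤ (IP R (r + 1) n c).colon {(Matrix.vandermonde X).det} := by
  have hsum := sum_adjugate_last_mul_X_pow R r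
  have hmem := sum_mul_X_pow_add_sub_C_mul_sum_mem_IP R (n := n) c
    ((Matrix.vandermonde X).adjugate (Fin.last r))
  rw [IG, Ideal.span_le, Set.union_subset_iff, Set.image_subset_iff, Set.singleton_subset_iff]
  refine ⟨fun k ⟨hk1, hk2⟩ => ?_, ?_⟩
  · have := hmem (k + r - n)
    rw [hsum, hsum, if_pos (show r ≤ k + r - n + n by omega),
      if_neg (show ¬r ≤ k + r - n by omega), mul_zero, mul_zero, sub_zero,
      show k + r - n + n - r = k by omega] at this
    simpa [Submodule.mem_colon_singleton, mul_comm] using this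
  · have := hmem r
    rw [hsum, hsum, if_pos (show r ≤ r + n by omega), if_pos le_rfl, Nat.add_sub_cancel_left,
      Nat.sub_self, _root_.hsymm_zero, mul_one] at this
    simpa [Submodule.mem_colon_singleton, mul_sub, mul_comm, mul_left_comm] using this

end

/-- Theorem 2.5 (algebraic form): for `1 ≤ r ≤ n`, a commutative ring `R` and `c ∈ R`,
multiplication by the Vandermonde determinant `Δ` carries the ideal
`I_G(c) = ⟨h_{n-r+1}, …, h_{n-1}, h_n - c⟩` into `I_P(c) = ⟨x₁ⁿ - c, …, x_rⁿ - c⟩`;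
in particular, if `P - Q ∈ I_G(c)` then `P·Δ - Q·Δ ∈ I_P(c)`. -/
theorem vandermonde_mul_IG_subset_IP (n r : ℕ) (hr : 1 ≤ r) (hrn : r ≤ n)
    (R : Type*) [CommRing R] (c : R) :
    (∀ f ∈ IG R r n c, vander R r * f ∈ IP R r n c) ∧
    ∀ P Q : MvPolynomial (Fin r) R, P - Q ∈ IG R r n c →
      P * vander R r - Q * vander R r ∈ IP R r n c := by
  have main : ∀ f ∈ IG R r n c, vander R r * f ∈ IP R r n c := by
    obtain ⟨r, rfl⟩ := Nat.exists_eq_add_of_le' hr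
    intro f hf
    obtain ⟨u, hu⟩ := (associated_vander_det_vandermonde R (r + 1)).symm
    have hdet := Submodule.mem_colon_singleton.mp (IG_le_colon_det_vandermonde R r hrn c hf)
    rw [← hu, mul_comm, ← mul_assoc, ← smul_eq_mul f]
    exact Ideal.mul_mem_right _ _ hdet
  exact ⟨main, fun P Q h => by simpa [mul_comm, ← sub_mul] using main _ h⟩
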